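/- arXiv:2301.01584 — 6 statements merged into one kernel-verified Lean document; each statement's English description precedes it below -/
import Mathlib

section
/- Let r ≥ 2 and let a_1,…,a_r be strictly positive real numbers. Then the map from V := {x ∈ ℝ^r : x_1 + ⋯ + x_r = 0} to ℝ^r sending x to Σ_{j=1}^r a_j e^{⟨v_j,x⟩} v_j is injective on V. -/
open scoped RealInnerProductSpace

/-- The standard basis `u_1, …, u_r` of `ℝ^r`. -/
noncomputable def stdU {r : ℕ} (j : Fin r) : EuclideanSpace ℝ (Fin r) :=
  EuclideanSpace.single j 1

/-- The vectors `v_j = u_{j+1} - u_j` (`j = 1, …, r-1`), `v_r = u_1 - u_r`. -/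
noncomputable def stdV {r : ℕ} (j : Fin r) : EuclideanSpace ℝ (Fin r) :=
  stdU (⟨(j.val + 1) % r, Nat.mod_lt _ j.pos⟩ : Fin r) - stdU j

/-!
The map `F` is the gradient of the convex function `x ↦ Σ_j a_j e^{⟨v_j,x⟩}`, hence monotone:
pairing `F x - F y` with `x - y` gives `Σ_j a_j (e^{⟨v_j,x⟩} - e^{⟨v_j,y⟩}) (⟨v_j,x⟩ - ⟨v_j,y⟩)`,
a sum of nonnegative terms that vanishes only if `x - y` is orthogonal to every `v_j`. That forces
`x - y` to have constant coordinates, and on `V` a constant vector is zero.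
-/

section StrictMono

variable {α : Type*} [Ring α] [LinearOrder α] [IsStrictOrderedRing α] {f : α → α}

theorem StrictMono.sub_mul_sub_pos (hf : StrictMono f) {s t : α} (hst : s ≠ t) :
    0 < (f s - f t) * (s - t) := by
  rcases hst.lt_or_gt with hlt | hlt
  · exact mul_pos_of_neg_of_neg (sub_neg.2 (hf hlt)) (sub_neg.2 hlt)
  · exact mul_pos (sub_pos.2 (hf hlt)) (sub_pos.2 hlt)

theorem StrictMono.sub_mul_sub_nonneg (hf : StrictMono f) (s t : α) :
    0 ≤ (f s - f t) * (s - t) := by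
  rcases eq_or_ne s t with rfl | hst
  · simp
  · exact (hf.sub_mul_sub_pos hst).le

end StrictMono

theorem inner_eq_of_sum_smul_eq {ι E : Type*} [Fintype ι] [NormedAddCommGroup E]
    [InnerProductSpace ℝ E] {f : ℝ → ℝ} (hf : StrictMono f) {a : ι → ℝ} (ha : ∀ j, 0 < a j)
    {v : ι → E} {x y : E}
    (h : ∑ j, (a j * f ⟪v j, x⟫) • v j = ∑ j, (a j * f ⟪v j, y⟫) • v j) (j : ι) :
    ⟪v j, x⟫ = ⟪v j, y⟫ := by
  have hpair : ∑ j, a j * ((f ⟪v j, x⟫ - f ⟪v j, y⟫) * (⟪v j, x⟫ - ⟪v j, y⟫)) = 0 := by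
    calc _ = ⟪∑ j, (a j * f ⟪v j, x⟫) • v j - ∑ j, (a j * f ⟪v j, y⟫) • v j, x - y⟫ := by
          simp only [← Finset.sum_sub_distrib, ← sub_smul, sum_inner, real_inner_smul_left,
            inner_sub_right]
          exact Finset.sum_congr rfl fun j _ => by ring
      _ = 0 := by rw [h, sub_self, inner_zero_left]
  have hterm := (Finset.sum_eq_zero_iff_of_nonneg fun j _ =>
    mul_nonneg (ha j).le (hf.sub_mul_sub_nonneg _ _)).1 hpair j (Finset.mem_univ j)
  by_contra hst
  exact (mul_pos (ha j) (hf.sub_mul_sub_pos hst)).ne' hterm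

theorem inner_stdV {r : ℕ} (j : Fin r) (x : EuclideanSpace ℝ (Fin r)) :
    ⟪stdV j, x⟫ = x ⟨(j.val + 1) % r, Nat.mod_lt _ j.pos⟩ - x j := by
  simp [stdV, stdU, inner_sub_left, EuclideanSpace.inner_single_left]

theorem Fin.apply_eq_apply_of_apply_succ_mod_eq {α : Type*} {r : ℕ} {z : Fin r → α}
    (h : ∀ j : Fin r, z ⟨(j.val + 1) % r, Nat.mod_lt _ j.pos⟩ = z j) (i k : Fin r) :
    z i = z k := by
  suffices hzero : ∀ i : Fin r, z i = z ⟨0, i.pos⟩ from (hzero i).trans (hzero k).symm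
  rintro ⟨n, hn⟩
  induction n with
  | zero => rfl
  | succ n ih =>
    rw [← ih (Nat.lt_of_succ_lt hn), ← h ⟨n, Nat.lt_of_succ_lt hn⟩]
    simp [Nat.mod_eq_of_lt hn]

theorem eq_zero_of_sum_eq_zero_of_forall_eq {r : ℕ} {z : Fin r → ℝ}
    (hsum : ∑ i, z i = 0) (hz : ∀ i k, z i = z k) (i : Fin r) : z i = 0 := by
  have hr : (r : ℝ) ≠ 0 := Nat.cast_ne_zero.2 i.pos.ne'
  simp only [hz _ i, Finset.sum_const, Finset.card_univ, Fintype.card_fin, nsmul_eq_mul] at hsum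
  exact (mul_eq_zero.1 hsum).resolve_left hr

theorem eq_of_inner_stdV_eq {r : ℕ} {x y : EuclideanSpace ℝ (Fin r)}
    (hx : ∑ i, x i = 0) (hy : ∑ i, y i = 0) (h : ∀ j, ⟪stdV j, x⟫ = ⟪stdV j, y⟫) : x = y := by
  set z : Fin r → ℝ := fun i => x i - y i
  have hshift : ∀ j : Fin r, z ⟨(j.val + 1) % r, Nat.mod_lt _ j.pos⟩ = z j := fun j => by
    have hj := h j
    rw [inner_stdV, inner_stdV] at hj
    simp only [z]
    linarith
  have hsum : ∑ i, z i = 0 := by simp only [z, Finset.sum_sub_distrib, hx, hy, sub_zero]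
  ext i
  exact sub_eq_zero.1 <| eq_zero_of_sum_eq_zero_of_forall_eq hsum
    (Fin.apply_eq_apply_of_apply_succ_mod_eq hshift) i

theorem injectivity_on_V_general (r : ℕ) (a : Fin r → ℝ) (ha : ∀ j, 0 < a j) :
    Set.InjOn
      (fun x : EuclideanSpace ℝ (Fin r) =>
        ∑ j : Fin r, (a j * Real.exp ⟪stdV j, x⟫) • stdV j)
      {x : EuclideanSpace ℝ (Fin r) | ∑ i : Fin r, x i = 0} :=
  fun _ hx _ hy hxy =>
    eq_of_inner_stdV_eq hx hy (inner_eq_of_sum_smul_eq Real.exp_strictMono ha hxy)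

/-- For strictly positive coefficients `a_1, …, a_r`, the map
`x ↦ Σ_j a_j e^{⟨v_j,x⟩} v_j` is injective on `V = {x ∈ ℝ^r : x_1 + ⋯ + x_r = 0}`. -/
theorem injectivity_on_V (r : ℕ) (hr : 2 ≤ r) (a : Fin r → ℝ) (ha : ∀ j, 0 < a j) :
    Set.InjOn
      (fun x : EuclideanSpace ℝ (Fin r) =>
        ∑ j : Fin r, (a j * Real.exp ⟪stdV j, x⟫) • stdV j)
      {x : EuclideanSpace ℝ (Fin r) | ∑ i : Fin r, x i = 0} :=
  injectivity_on_V_general r a ha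
end

section
/- Let Ω ⊆ ℝ^n be open, let a_1,…,a_r : Ω → ℝ be nonnegative continuous functions and w : Ω → ℝ^r continuous. Suppose ξ, ξ′ : Ω → ℝ^r are C² and both satisfy the equation −Δζ + Σ_{j=1}^r a_j e^{⟨v_j,ζ⟩} v_j = w on Ω. Then at every point of Ω one has (1/2)·Δ(‖ξ − ξ′‖²) ≥ Σ_{j=1}^r a_j (e^{⟨v_j,ξ⟩} − e^{⟨v_j,ξ′⟩}) ⟨v_j, ξ − ξ′⟩ ≥ 0; in particular ‖ξ − ξ′‖² has nonnegative Euclidean Laplacian on Ω. (Euclidean-domain version of Lemma 2.2.) -/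
/-!
Write `η = ξ - ξ'`. The pointwise identity `Δ‖η‖² = 2 Σᵢ ‖∂ᵢη‖² + 2⟪η, Δη⟫` gives
`⟪η, Δη⟫ ≤ ½ Δ‖η‖²`, and subtracting the two equations turns `⟪η, Δη⟫` into
`Σⱼ aⱼ (e^{⟪vⱼ, ξ⟫} - e^{⟪vⱼ, ξ'⟫}) ⟪vⱼ, η⟫`, whose terms are nonnegative because `exp` is increasing.
-/

open scoped RealInnerProductSpace

/-- The Euclidean Laplacian `Δf = Σ_i ∂²f/∂x_i²` (componentwise for vector-valued `f`). -/
noncomputable def lap {n : ℕ} {F : Type*} [NormedAddCommGroup F] [NormedSpace ℝ F]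
    (f : EuclideanSpace ℝ (Fin n) → F) (x : EuclideanSpace ℝ (Fin n)) : F :=
  ∑ i : Fin n, iteratedFDeriv ℝ 2 f x (fun _ => EuclideanSpace.single i 1)

open InnerProductSpace Laplacian

lemma lap_eq_laplacian {n : ℕ} {F : Type*} [NormedAddCommGroup F] [NormedSpace ℝ F]
    (f : EuclideanSpace ℝ (Fin n) → F) : lap f = Δ f := by
  rw [laplacian_eq_iteratedFDeriv_orthonormalBasis f (EuclideanSpace.basisFun (Fin n) ℝ)]
  ext x
  simp only [lap, EuclideanSpace.basisFun_apply]
  congr! 2 with i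
  funext k; fin_cases k <;> rfl

section NormSq

variable {E F : Type*} [NormedAddCommGroup E] [NormedAddCommGroup F] [InnerProductSpace ℝ F]
  {η : E → F} {x : E}

theorem ContDiffAt.iteratedFDeriv_two_norm_sq_apply [NormedSpace ℝ E] (hη : ContDiffAt ℝ 2 η x)
    (v : E) :
    iteratedFDeriv ℝ 2 (fun y => ‖η y‖ ^ 2) x ![v, v]
      = 2 * ‖fderiv ℝ η x v‖ ^ 2 + 2 * ⟪η x, iteratedFDeriv ℝ 2 η x ![v, v]⟫ := by
  have hdη : DifferentiableAt ℝ (fderiv ℝ η) x :=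
    (hη.fderiv_right (m := 1) le_rfl).differentiableAt one_ne_zero
  have hdg : DifferentiableAt ℝ (fderiv ℝ fun y => ‖η y‖ ^ 2) x :=
    ((hη.norm_sq ℝ).fderiv_right (m := 1) le_rfl).differentiableAt one_ne_zero
  have hfderiv : (fun y => fderiv ℝ (fun y => ‖η y‖ ^ 2) y v) =ᶠ[nhds x]
      fun y => 2 * ⟪η y, fderiv ℝ η y v⟫ := by
    filter_upwards [hη.eventually (by simp)] with y hy
    simp [((hy.differentiableAt two_ne_zero).hasFDerivAt.norm_sq).fderiv]
  have hderiv_v : HasFDerivAt (fun y => fderiv ℝ η y v) ((fderiv ℝ (fderiv ℝ η) x).flip v) x := by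
    simpa using hdη.hasFDerivAt.clm_apply (hasFDerivAt_const v x)
  have hinner := ((hη.differentiableAt two_ne_zero).hasFDerivAt.inner ℝ hderiv_v).const_mul 2
  have hcurry : fderiv ℝ (fun y => fderiv ℝ (fun y => ‖η y‖ ^ 2) y v) x v
      = fderiv ℝ (fderiv ℝ fun y => ‖η y‖ ^ 2) x v v := by
    rw [(hdg.hasFDerivAt.clm_apply (hasFDerivAt_const v x)).fderiv]; simp
  rw [iteratedFDeriv_two_apply, iteratedFDeriv_two_apply]
  simp only [Matrix.cons_val_zero, Matrix.cons_val_one]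
  rw [← hcurry, hfderiv.fderiv_eq, hinner.fderiv]
  simp only [smul_apply, ContinuousLinearMap.comp_apply,
    ContinuousLinearMap.prod_apply, ContinuousLinearMap.flip_apply, fderivInnerCLM_apply,
    inner_self_eq_norm_sq_to_K, Real.ringHom_apply, smul_eq_mul]
  ring

theorem ContDiffAt.laplacian_norm_sq [InnerProductSpace ℝ E] [FiniteDimensional ℝ E] {ι : Type*}
    [Fintype ι] (b : OrthonormalBasis ι ℝ E) (hη : ContDiffAt ℝ 2 η x) :
    Δ (fun y => ‖η y‖ ^ 2) x = 2 * ∑ i, ‖fderiv ℝ η x (b i)‖ ^ 2 + 2 * ⟪η x, Δ η x⟫ := by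
  simp only [laplacian_eq_iteratedFDeriv_orthonormalBasis _ b, hη.iteratedFDeriv_two_norm_sq_apply,
    inner_sum, Finset.mul_sum, Finset.sum_add_distrib]

theorem ContDiffAt.inner_laplacian_le_half_laplacian_norm_sq [InnerProductSpace ℝ E]
    [FiniteDimensional ℝ E] (hη : ContDiffAt ℝ 2 η x) :
    ⟪η x, Δ η x⟫ ≤ 1 / 2 * Δ (fun y => ‖η y‖ ^ 2) x := by
  have hgrad : 0 ≤ ∑ i, ‖fderiv ℝ η x (stdOrthonormalBasis ℝ E i)‖ ^ 2 :=
    Finset.sum_nonneg fun i _ => sq_nonneg _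
  rw [hη.laplacian_norm_sq (stdOrthonormalBasis ℝ E)]
  linarith

end NormSq

theorem Real.exp_sub_exp_mul_sub_nonneg (s t : ℝ) : 0 ≤ (Real.exp s - Real.exp t) * (s - t) := by
  rcases le_total s t with hst | hts
  · exact mul_nonneg_of_nonpos_of_nonpos (sub_nonpos.2 (Real.exp_le_exp.2 hst)) (sub_nonpos.2 hst)
  · exact mul_nonneg (sub_nonneg.2 (Real.exp_le_exp.2 hts)) (sub_nonneg.2 hts)

theorem subharmonicity_of_difference_general (n r : ℕ)
    (Ω : Set (EuclideanSpace ℝ (Fin n))) (hΩ : IsOpen Ω)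
    (a : Fin r → EuclideanSpace ℝ (Fin n) → ℝ)
    (ha_nonneg : ∀ j, ∀ x ∈ Ω, 0 ≤ a j x)
    (w : EuclideanSpace ℝ (Fin n) → EuclideanSpace ℝ (Fin r))
    (ξ ξ' : EuclideanSpace ℝ (Fin n) → EuclideanSpace ℝ (Fin r))
    (hξ : ContDiffOn ℝ 2 ξ Ω) (hξ' : ContDiffOn ℝ 2 ξ' Ω)
    (heq : ∀ x ∈ Ω, -lap ξ x + ∑ j : Fin r, (a j x * Real.exp ⟪stdV j, ξ x⟫) • stdV j = w x)
    (heq' : ∀ x ∈ Ω, -lap ξ' x + ∑ j : Fin r, (a j x * Real.exp ⟪stdV j, ξ' x⟫) • stdV j = w x) :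
    ∀ x ∈ Ω,
      (∑ j : Fin r, a j x * (Real.exp ⟪stdV j, ξ x⟫ - Real.exp ⟪stdV j, ξ' x⟫) *
          ⟪stdV j, ξ x - ξ' x⟫) ≤ (1 / 2) * lap (fun y => ‖ξ y - ξ' y‖ ^ 2) x ∧
      0 ≤ ∑ j : Fin r, a j x * (Real.exp ⟪stdV j, ξ x⟫ - Real.exp ⟪stdV j, ξ' x⟫) *
          ⟪stdV j, ξ x - ξ' x⟫ := by
  intro x hx
  have hξx : ContDiffAt ℝ 2 ξ x := (hξ x hx).contDiffAt (hΩ.mem_nhds hx)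
  have hξ'x : ContDiffAt ℝ 2 ξ' x := (hξ' x hx).contDiffAt (hΩ.mem_nhds hx)
  simp only [lap_eq_laplacian] at heq heq' ⊢
  have hlap_sub : Δ (fun y => ξ y - ξ' y) x
      = ∑ j : Fin r, (a j x * (Real.exp ⟪stdV j, ξ x⟫ - Real.exp ⟪stdV j, ξ' x⟫)) • stdV j := by
    have hdiff := (heq x hx).trans (heq' x hx).symm
    simp only [mul_sub, sub_smul, Finset.sum_sub_distrib]
    rw [← Pi.sub_def, hξx.laplacian_sub hξ'x]
    linear_combination (norm := module) -hdiff
  constructor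
  · convert (hξx.sub hξ'x).inner_laplacian_le_half_laplacian_norm_sq using 1
    · rw [hlap_sub, inner_sum]
      refine Finset.sum_congr rfl fun j _ => ?_
      rw [real_inner_smul_right, real_inner_comm (stdV j)]
  · refine Finset.sum_nonneg fun j _ => ?_
    rw [mul_assoc, inner_sub_right]
    exact mul_nonneg (ha_nonneg j x hx) (Real.exp_sub_exp_mul_sub_nonneg _ _)

/-- Euclidean-domain version of Lemma 2.2: for two `C²` solutions `ξ, ξ'` of
`−Δζ + Σ_j a_j e^{⟨v_j,ζ⟩} v_j = w` on `Ω`, one has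
`(1/2)Δ(‖ξ−ξ'‖²) ≥ Σ_j a_j (e^{⟨v_j,ξ⟩} − e^{⟨v_j,ξ'⟩}) ⟨v_j, ξ−ξ'⟩ ≥ 0` on `Ω`. -/
theorem subharmonicity_of_difference (n r : ℕ) (hr : 2 ≤ r)
    (Ω : Set (EuclideanSpace ℝ (Fin n))) (hΩ : IsOpen Ω)
    (a : Fin r → EuclideanSpace ℝ (Fin n) → ℝ)
    (ha_cont : ∀ j, ContinuousOn (a j) Ω) (ha_nonneg : ∀ j, ∀ x ∈ Ω, 0 ≤ a j x)
    (w : EuclideanSpace ℝ (Fin n) → EuclideanSpace ℝ (Fin r)) (hw : ContinuousOn w Ω)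
    (ξ ξ' : EuclideanSpace ℝ (Fin n) → EuclideanSpace ℝ (Fin r))
    (hξ : ContDiffOn ℝ 2 ξ Ω) (hξ' : ContDiffOn ℝ 2 ξ' Ω)
    (heq : ∀ x ∈ Ω, -lap ξ x + ∑ j : Fin r, (a j x * Real.exp ⟪stdV j, ξ x⟫) • stdV j = w x)
    (heq' : ∀ x ∈ Ω, -lap ξ' x + ∑ j : Fin r, (a j x * Real.exp ⟪stdV j, ξ' x⟫) • stdV j = w x) :
    ∀ x ∈ Ω,
      (∑ j : Fin r, a j x * (Real.exp ⟪stdV j, ξ x⟫ - Real.exp ⟪stdV j, ξ' x⟫) *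
          ⟪stdV j, ξ x - ξ' x⟫) ≤ (1 / 2) * lap (fun y => ‖ξ y - ξ' y‖ ^ 2) x ∧
      0 ≤ ∑ j : Fin r, a j x * (Real.exp ⟪stdV j, ξ x⟫ - Real.exp ⟪stdV j, ξ' x⟫) *
          ⟪stdV j, ξ x - ξ' x⟫ :=
  subharmonicity_of_difference_general n r Ω hΩ a ha_nonneg w ξ ξ' hξ hξ' heq heq'
end

section
/- Let Ω ⊆ ℝ^n be open, let a_1,…,a_r : Ω → ℝ be nonnegative continuous functions and w : Ω → ℝ^r continuous, and let T > 0. Suppose ξ, ξ′ : (0,T) × Ω → ℝ^r are C² (jointly in (t,x)) and both satisfy the heat equation ∂_t ζ(t,x) − Δ_x ζ(t,x) + Σ_{j=1}^r a_j(x) e^{⟨v_j,ζ(t,x)⟩} v_j − w(x) = 0 on (0,T) × Ω, where Δ_x is the Euclidean Laplacian in the x-variable. Then at every point of (0,T) × Ω, (1/2)(∂_t − Δ_x)(‖ξ − ξ′‖²) ≤ −Σ_{j=1}^r a_j (e^{⟨v_j,ξ⟩} − e^{⟨v_j,ξ′⟩}) ⟨v_j, ξ − ξ′⟩ ≤ 0.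 (Euclidean-domain version of Lemma 2.1.) -/
/-! With η = ξ − ξ′, the product rule gives
(1/2)(∂_t − Δ)‖η‖² = ⟪η, (∂_t − Δ)η⟫ − Σ_i ‖∂_i η‖², and subtracting the two equations turns
⟪η, (∂_t − Δ)η⟫ into −Σ_j a_j (e^{⟨v_j,ξ⟩} − e^{⟨v_j,ξ′⟩}) ⟨v_j, η⟩. Each summand of the last sum
is nonnegative since exp is monotone: the nonlinearity is the gradient of the convex potential
Σ_j a_j e^{⟨v_j,·⟩}. -/

open scoped RealInnerProductSpace

open Finset

section SecondDerivative

variable {E F : Type*} [NormedAddCommGroup E] [NormedSpace ℝ E]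

theorem fderiv_fderiv_apply_apply [NormedAddCommGroup F] [NormedSpace ℝ F] {f : E → F} {x : E}
    (hf : DifferentiableAt ℝ (fderiv ℝ f) x) (e₁ e₂ : E) :
    fderiv ℝ (fderiv ℝ f) x e₁ e₂ = fderiv ℝ (fun y => fderiv ℝ f y e₂) x e₁ := by
  have hD : HasFDerivAt (fun y => fderiv ℝ f y e₂) _ x :=
    (ContinuousLinearMap.apply ℝ F e₂).hasFDerivAt.comp x hf.hasFDerivAt
  rw [hD.fderiv]
  rfl

theorem fderiv_fderiv_norm_sq_apply [NormedAddCommGroup F] [InnerProductSpace ℝ F] {h : E → F}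
    {x : E} (hh : ContDiffAt ℝ 2 h x) (e : E) :
    fderiv ℝ (fderiv ℝ (fun y => ‖h y‖ ^ 2)) x e e
      = 2 * ⟪h x, fderiv ℝ (fderiv ℝ h) x e e⟫ + 2 * ‖fderiv ℝ h x e‖ ^ 2 := by
  have hDh : DifferentiableAt ℝ (fderiv ℝ h) x :=
    (hh.fderiv_right le_rfl).differentiableAt one_ne_zero
  have hDhe : DifferentiableAt ℝ (fun y => fderiv ℝ h y e) x :=
    (ContinuousLinearMap.apply ℝ F e).differentiableAt.comp x hDh
  have hnorm_sq : ContDiffAt ℝ 2 (fun y => ‖h y‖ ^ 2) x :=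
    (contDiff_norm_sq ℝ).contDiffAt.comp x hh
  have hfirst : (fun y => fderiv ℝ (fun y => ‖h y‖ ^ 2) y e)
      =ᶠ[nhds x] fun y => 2 * ⟪h y, fderiv ℝ h y e⟫ := by
    filter_upwards [hh.eventually (by simp)] with y hy
    rw [(hy.differentiableAt two_ne_zero).hasFDerivAt.norm_sq.fderiv]
    simp
  rw [fderiv_fderiv_apply_apply ((hnorm_sq.fderiv_right le_rfl).differentiableAt one_ne_zero),
    hfirst.fderiv_eq, fderiv_const_mul ((hh.differentiableAt two_ne_zero).inner ℝ hDhe),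
    smul_apply, fderiv_inner_apply ℝ (hh.differentiableAt two_ne_zero) hDhe,
    ← fderiv_fderiv_apply_apply hDh, real_inner_self_eq_norm_sq, smul_eq_mul]
  ring

end SecondDerivative

section Laplacian

variable {n : ℕ} {F : Type*} [NormedAddCommGroup F] [InnerProductSpace ℝ F]
  {x : EuclideanSpace ℝ (Fin n)}

theorem lap_sub {f g : EuclideanSpace ℝ (Fin n) → F} (hf : ContDiffAt ℝ 2 f x)
    (hg : ContDiffAt ℝ 2 g x) : lap (fun y => f y - g y) x = lap f x - lap g x := by
  simp only [lap, ← sum_sub_distrib]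
  refine sum_congr rfl fun i _ => ?_
  rw [← sub_apply, ← iteratedFDeriv_sub_apply hf hg]
  rfl

theorem lap_norm_sq {h : EuclideanSpace ℝ (Fin n) → F} (hh : ContDiffAt ℝ 2 h x) :
    lap (fun y => ‖h y‖ ^ 2) x
      = 2 * ⟪h x, lap h x⟫ + 2 * ∑ i, ‖fderiv ℝ h x (EuclideanSpace.single i 1)‖ ^ 2 := by
  simp only [lap, iteratedFDeriv_two_apply, fderiv_fderiv_norm_sq_apply hh, sum_add_distrib,
    inner_sum, mul_sum]

theorem half_heat_norm_sq_le {ζ : ℝ → EuclideanSpace ℝ (Fin n) → F} {t : ℝ}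
    (hx : ContDiffAt ℝ 2 (ζ t) x) (ht : DifferentiableAt ℝ (fun s => ζ s x) t) :
    (1 / 2) * (deriv (fun s => ‖ζ s x‖ ^ 2) t - lap (fun y => ‖ζ t y‖ ^ 2) x)
      ≤ ⟪ζ t x, deriv (fun s => ζ s x) t - lap (ζ t) x⟫ := by
  have hgrad : 0 ≤ ∑ i, ‖fderiv ℝ (ζ t) x (EuclideanSpace.single i 1)‖ ^ 2 :=
    sum_nonneg fun i _ => sq_nonneg _
  rw [ht.hasDerivAt.norm_sq.deriv, lap_norm_sq hx, inner_sub_right]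
  linarith

theorem half_heat_norm_sq_sub_le {ζ ζ' : ℝ → EuclideanSpace ℝ (Fin n) → F} {t : ℝ}
    (hx : ContDiffAt ℝ 2 (ζ t) x) (hx' : ContDiffAt ℝ 2 (ζ' t) x)
    (ht : DifferentiableAt ℝ (fun s => ζ s x) t) (ht' : DifferentiableAt ℝ (fun s => ζ' s x) t) :
    (1 / 2) * (deriv (fun s => ‖ζ s x - ζ' s x‖ ^ 2) t
        - lap (fun y => ‖ζ t y - ζ' t y‖ ^ 2) x)
      ≤ ⟪ζ t x - ζ' t x, (deriv (fun s => ζ s x) t - lap (ζ t) x)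
          - (deriv (fun s => ζ' s x) t - lap (ζ' t) x)⟫ := by
  have h := half_heat_norm_sq_le (ζ := fun s y => ζ s y - ζ' s y) (hx.sub hx') (ht.sub ht')
  rwa [deriv_fun_sub ht ht', lap_sub hx hx', sub_sub_sub_comm] at h

end Laplacian

theorem ContDiffOn.contDiffAt_slices {E F : Type*} [NormedAddCommGroup E] [NormedSpace ℝ E]
    [NormedAddCommGroup F] [NormedSpace ℝ F] {k : WithTop ℕ∞} {f : ℝ → E → F} {s : Set ℝ}
    {U : Set E} (hf : ContDiffOn ℝ k (fun p : ℝ × E => f p.1 p.2) (s ×ˢ U)) (hs : IsOpen s)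
    (hU : IsOpen U) {t : ℝ} {x : E} (ht : t ∈ s) (hx : x ∈ U) :
    ContDiffAt ℝ k (f t) x ∧ ContDiffAt ℝ k (fun s => f s x) t := by
  have hf' := hf.contDiffAt ((hs.prod hU).mem_nhds (Set.mk_mem_prod ht hx))
  exact ⟨hf'.comp x (contDiffAt_const.prodMk contDiffAt_id),
    hf'.comp t (contDiffAt_id.prodMk contDiffAt_const)⟩

section Potential

variable {ι F : Type*} [Fintype ι] [NormedAddCommGroup F] [InnerProductSpace ℝ F]
  {v : ι → F} {c : ι → ℝ} {φ : ℝ → ℝ} {p q : F}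

theorem inner_sub_sum_smul_sub_sum_smul :
    ⟪p - q, ∑ j, (c j * φ ⟪v j, q⟫) • v j - ∑ j, (c j * φ ⟪v j, p⟫) • v j⟫
      = -∑ j, c j * (φ ⟪v j, p⟫ - φ ⟪v j, q⟫) * ⟪v j, p - q⟫ := by
  simp only [inner_sub_right, inner_sum, real_inner_smul_right, ← sum_sub_distrib,
    ← sum_neg_distrib, real_inner_comm (p - q), inner_sub_right]
  refine sum_congr rfl fun j _ => ?_
  ring

theorem sum_mul_sub_mul_inner_sub_nonneg (hφ : Monotone φ)
    (hc : ∀ j, 0 ≤ c j) : 0 ≤ ∑ j, c j * (φ ⟪v j, p⟫ - φ ⟪v j, q⟫) * ⟪v j, p - q⟫ := by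
  refine sum_nonneg fun j _ => ?_
  rw [mul_assoc, inner_sub_right]
  exact mul_nonneg (hc j) ((monovary_id_iff.2 hφ).sub_mul_sub_nonneg _ _)

end Potential

theorem heat_flow_difference_estimate_general (n r : ℕ)
    (Ω : Set (EuclideanSpace ℝ (Fin n))) (hΩ : IsOpen Ω)
    (a : Fin r → EuclideanSpace ℝ (Fin n) → ℝ)
    (ha_nonneg : ∀ j, ∀ x ∈ Ω, 0 ≤ a j x)
    (w : EuclideanSpace ℝ (Fin n) → EuclideanSpace ℝ (Fin r))
    (T : ℝ)
    (ξ ξ' : ℝ → EuclideanSpace ℝ (Fin n) → EuclideanSpace ℝ (Fin r))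
    (hξ : ContDiffOn ℝ 2 (fun p : ℝ × EuclideanSpace ℝ (Fin n) => ξ p.1 p.2)
      (Set.Ioo 0 T ×ˢ Ω))
    (hξ' : ContDiffOn ℝ 2 (fun p : ℝ × EuclideanSpace ℝ (Fin n) => ξ' p.1 p.2)
      (Set.Ioo 0 T ×ˢ Ω))
    (heq : ∀ t ∈ Set.Ioo (0 : ℝ) T, ∀ x ∈ Ω,
      deriv (fun s => ξ s x) t - lap (ξ t) x
        + ∑ j : Fin r, (a j x * Real.exp ⟪stdV j, ξ t x⟫) • stdV j - w x = 0)
    (heq' : ∀ t ∈ Set.Ioo (0 : ℝ) T, ∀ x ∈ Ω,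
      deriv (fun s => ξ' s x) t - lap (ξ' t) x
        + ∑ j : Fin r, (a j x * Real.exp ⟪stdV j, ξ' t x⟫) • stdV j - w x = 0) :
    ∀ t ∈ Set.Ioo (0 : ℝ) T, ∀ x ∈ Ω,
      (1 / 2) * (deriv (fun s => ‖ξ s x - ξ' s x‖ ^ 2) t
          - lap (fun y => ‖ξ t y - ξ' t y‖ ^ 2) x)
        ≤ -∑ j : Fin r, a j x * (Real.exp ⟪stdV j, ξ t x⟫ - Real.exp ⟪stdV j, ξ' t x⟫) *
            ⟪stdV j, ξ t x - ξ' t x⟫ ∧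
      -∑ j : Fin r, a j x * (Real.exp ⟪stdV j, ξ t x⟫ - Real.exp ⟪stdV j, ξ' t x⟫) *
          ⟪stdV j, ξ t x - ξ' t x⟫ ≤ 0 := by
  intro t ht x hx
  obtain ⟨hξx, hξt⟩ := hξ.contDiffAt_slices isOpen_Ioo hΩ ht hx
  obtain ⟨hξ'x, hξ't⟩ := hξ'.contDiffAt_slices isOpen_Ioo hΩ ht hx
  have hheat : (deriv (fun s => ξ s x) t - lap (ξ t) x)
        - (deriv (fun s => ξ' s x) t - lap (ξ' t) x)
      = ∑ j, (a j x * Real.exp ⟪stdV j, ξ' t x⟫) • stdV j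
        - ∑ j, (a j x * Real.exp ⟪stdV j, ξ t x⟫) • stdV j := by
    linear_combination (norm := module) heq t ht x hx - heq' t ht x hx
  refine ⟨?_, neg_nonpos.2 <| sum_mul_sub_mul_inner_sub_nonneg Real.exp_monotone
    fun j => ha_nonneg j x hx⟩
  calc _ ≤ _ := half_heat_norm_sq_sub_le hξx hξ'x (hξt.differentiableAt two_ne_zero)
          (hξ't.differentiableAt two_ne_zero)
    _ = _ := by rw [hheat, inner_sub_sum_smul_sub_sum_smul]

/-- Euclidean-domain version of Lemma 2.1: for two solutions `ξ, ξ'` of the heat equation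
`∂_t ζ − Δ_x ζ + Σ_j a_j e^{⟨v_j,ζ⟩} v_j − w = 0` on `(0,T) × Ω`, one has
`(1/2)(∂_t − Δ_x)(‖ξ−ξ'‖²) ≤ −Σ_j a_j (e^{⟨v_j,ξ⟩} − e^{⟨v_j,ξ'⟩}) ⟨v_j, ξ−ξ'⟩ ≤ 0`. -/
theorem heat_flow_difference_estimate (n r : ℕ) (hr : 2 ≤ r)
    (Ω : Set (EuclideanSpace ℝ (Fin n))) (hΩ : IsOpen Ω)
    (a : Fin r → EuclideanSpace ℝ (Fin n) → ℝ)
    (ha_cont : ∀ j, ContinuousOn (a j) Ω) (ha_nonneg : ∀ j, ∀ x ∈ Ω, 0 ≤ a j x)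
    (w : EuclideanSpace ℝ (Fin n) → EuclideanSpace ℝ (Fin r)) (hw : ContinuousOn w Ω)
    (T : ℝ) (hT : 0 < T)
    (ξ ξ' : ℝ → EuclideanSpace ℝ (Fin n) → EuclideanSpace ℝ (Fin r))
    (hξ : ContDiffOn ℝ 2 (fun p : ℝ × EuclideanSpace ℝ (Fin n) => ξ p.1 p.2)
      (Set.Ioo 0 T ×ˢ Ω))
    (hξ' : ContDiffOn ℝ 2 (fun p : ℝ × EuclideanSpace ℝ (Fin n) => ξ' p.1 p.2)
      (Set.Ioo 0 T ×ˢ Ω))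
    (heq : ∀ t ∈ Set.Ioo (0 : ℝ) T, ∀ x ∈ Ω,
      deriv (fun s => ξ s x) t - lap (ξ t) x
        + ∑ j : Fin r, (a j x * Real.exp ⟪stdV j, ξ t x⟫) • stdV j - w x = 0)
    (heq' : ∀ t ∈ Set.Ioo (0 : ℝ) T, ∀ x ∈ Ω,
      deriv (fun s => ξ' s x) t - lap (ξ' t) x
        + ∑ j : Fin r, (a j x * Real.exp ⟪stdV j, ξ' t x⟫) • stdV j - w x = 0) :
    ∀ t ∈ Set.Ioo (0 : ℝ) T, ∀ x ∈ Ω,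
      (1 / 2) * (deriv (fun s => ‖ξ s x - ξ' s x‖ ^ 2) t
          - lap (fun y => ‖ξ t y - ξ' t y‖ ^ 2) x)
        ≤ -∑ j : Fin r, a j x * (Real.exp ⟪stdV j, ξ t x⟫ - Real.exp ⟪stdV j, ξ' t x⟫) *
            ⟪stdV j, ξ t x - ξ' t x⟫ ∧
      -∑ j : Fin r, a j x * (Real.exp ⟪stdV j, ξ t x⟫ - Real.exp ⟪stdV j, ξ' t x⟫) *
          ⟪stdV j, ξ t x - ξ' t x⟫ ≤ 0 :=
  heat_flow_difference_estimate_general n r Ω hΩ a ha_nonneg w T ξ ξ' hξ hξ' heq heq'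
end

section
/- Let Ω ⊆ ℝ^n be open, let a_1,…,a_r : Ω → ℝ be nonnegative C² functions and w : Ω → ℝ^r a C² function, and let T > 0. Suppose ξ : (0,T) × Ω → ℝ^r is C^∞ and satisfies ∂_t ξ(t,x) − Δ_x ξ(t,x) + Σ_{j=1}^r a_j(x) e^{⟨v_j,ξ(t,x)⟩} v_j − w(x) = 0 on (0,T) × Ω. Define F(t,x) := −Δ_x ξ(t,x) + Σ_{j=1}^r a_j(x) e^{⟨v_j,ξ(t,x)⟩} v_j − w(x) (so F = −∂_t ξ). Then at every point of (0,T) × Ω, (1/2)(∂_t − Δ_x)(‖F‖²) ≤ −Σ_{j=1}^r a_j e^{⟨v_j,ξ⟩} ⟨v_j, F⟩² ≤ 0. (Euclidean-domain version of Lemma 2.4.) -/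
open scoped RealInnerProductSpace

section Helpers
variable {E V : Type*} [NormedAddCommGroup E] [NormedSpace ℝ E]
  [NormedAddCommGroup V] [NormedSpace ℝ V]
lemma slice_fst_hasDerivAt {h : ℝ × E → V} {h' : ℝ × E →L[ℝ] V} {t : ℝ} {x : E}
    (H : HasFDerivAt h h' (t, x)) :
    HasDerivAt (fun s => h (s, x)) (h' (1, 0)) t := by
  have h1 : HasFDerivAt (fun s : ℝ => (s, x)) ((ContinuousLinearMap.id ℝ ℝ).prod 0) t :=
    (hasFDerivAt_id t).prodMk (hasFDerivAt_const x t)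
  have h2 := (H.comp t h1).hasDerivAt
  simpa [Function.comp_def] using h2
lemma slice_snd_hasFDerivAt {h : ℝ × E → V} {h' : ℝ × E →L[ℝ] V} {t : ℝ} {x : E}
    (H : HasFDerivAt h h' (t, x)) :
    HasFDerivAt (fun y => h (t, y))
      (h'.comp ((0 : E →L[ℝ] ℝ).prod (ContinuousLinearMap.id ℝ E))) x :=
  H.comp x ((hasFDerivAt_const t x).prodMk (hasFDerivAt_id x))
lemma slice_snd_fderiv {h : ℝ × E → V} {h' : ℝ × E →L[ℝ] V} {t : ℝ} {x : E}
    (H : HasFDerivAt h h' (t, x)) (e : E) :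
    fderiv ℝ (fun y => h (t, y)) x e = h' (0, e) := by
  rw [(slice_snd_hasFDerivAt H).fderiv]; simp
lemma fderiv_dir_apply {P : Type*} [NormedAddCommGroup P] [NormedSpace ℝ P]
    {h : P → V} {p : P} (hdiff : DifferentiableAt ℝ (fderiv ℝ h) p) (d e : P) :
    fderiv ℝ (fun q => fderiv ℝ h q d) p e = fderiv ℝ (fderiv ℝ h) p e d := by
  have : HasFDerivAt (fun q => fderiv ℝ h q d)
      ((ContinuousLinearMap.apply ℝ V d).comp (fderiv ℝ (fderiv ℝ h) p)) p :=
    (ContinuousLinearMap.apply ℝ V d).hasFDerivAt.comp p hdiff.hasFDerivAt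
  rw [this.fderiv]; rfl
lemma fderiv_swap_dir {P : Type*} [NormedAddCommGroup P] [NormedSpace ℝ P]
    {h : P → V} {U : Set P} (hU : IsOpen U) (hh : ContDiffOn ℝ 2 h U) {p : P} (hp : p ∈ U)
    (d e : P) :
    fderiv ℝ (fun q => fderiv ℝ h q d) p e = fderiv ℝ (fun q => fderiv ℝ h q e) p d := by
  have hdiff : DifferentiableAt ℝ (fderiv ℝ h) p :=
    ((hh.fderiv_of_isOpen (m := 1) hU (by norm_num)).differentiableOn (by norm_num)).differentiableAt
      (hU.mem_nhds hp)
  rw [fderiv_dir_apply hdiff d e, fderiv_dir_apply hdiff e d]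
  exact (hh.contDiffAt (hU.mem_nhds hp)).isSymmSndFDerivAt (by simp) e d
end Helpers


/-- Euclidean-domain version of Lemma 2.4: along a smooth solution `ξ` of the heat equation,
with `F = −Δ_x ξ + Σ_j a_j e^{⟨v_j,ξ⟩} v_j − w`, one has
`(1/2)(∂_t − Δ_x)(‖F‖²) ≤ −Σ_j a_j e^{⟨v_j,ξ⟩} ⟨v_j, F⟩² ≤ 0` on `(0,T) × Ω`. -/
theorem heat_flow_tension_estimate (n r : ℕ) (hr : 2 ≤ r)
    (Ω : Set (EuclideanSpace ℝ (Fin n))) (hΩ : IsOpen Ω)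
    (a : Fin r → EuclideanSpace ℝ (Fin n) → ℝ)
    (ha_C2 : ∀ j, ContDiffOn ℝ 2 (a j) Ω) (ha_nonneg : ∀ j, ∀ x ∈ Ω, 0 ≤ a j x)
    (w : EuclideanSpace ℝ (Fin n) → EuclideanSpace ℝ (Fin r)) (hw : ContDiffOn ℝ 2 w Ω)
    (T : ℝ) (hT : 0 < T)
    (ξ : ℝ → EuclideanSpace ℝ (Fin n) → EuclideanSpace ℝ (Fin r))
    (hξ : ContDiffOn ℝ (⊤ : ℕ∞) (fun p : ℝ × EuclideanSpace ℝ (Fin n) => ξ p.1 p.2)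
      (Set.Ioo 0 T ×ˢ Ω))
    (heq : ∀ t ∈ Set.Ioo (0 : ℝ) T, ∀ x ∈ Ω,
      deriv (fun s => ξ s x) t - lap (ξ t) x
        + ∑ j : Fin r, (a j x * Real.exp ⟪stdV j, ξ t x⟫) • stdV j - w x = 0)
    (F : ℝ → EuclideanSpace ℝ (Fin n) → EuclideanSpace ℝ (Fin r))
    (hF : ∀ t x, F t x = -lap (ξ t) x
        + ∑ j : Fin r, (a j x * Real.exp ⟪stdV j, ξ t x⟫) • stdV j - w x) :
    ∀ t ∈ Set.Ioo (0 : ℝ) T, ∀ x ∈ Ω,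
      (1 / 2) * (deriv (fun s => ‖F s x‖ ^ 2) t - lap (fun y => ‖F t y‖ ^ 2) x)
        ≤ -∑ j : Fin r, a j x * Real.exp ⟪stdV j, ξ t x⟫ * ⟪stdV j, F t x⟫ ^ 2 ∧
      -∑ j : Fin r, a j x * Real.exp ⟪stdV j, ξ t x⟫ * ⟪stdV j, F t x⟫ ^ 2 ≤ 0 := by
  intro t ht x hx
  have hineq2 : -∑ j : Fin r, a j x * Real.exp ⟪stdV j, ξ t x⟫ * ⟪stdV j, F t x⟫ ^ 2 ≤ 0 := by
    rw [neg_nonpos]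
    refine Finset.sum_nonneg fun j _ => ?_
    have := ha_nonneg j x hx
    positivity
  refine ⟨?_, hineq2⟩
  classical
  set U : Set (ℝ × EuclideanSpace ℝ (Fin n)) := Set.Ioo 0 T ×ˢ Ω with hU_def
  have hUopen : IsOpen U := isOpen_Ioo.prod hΩ
  set Φ : ℝ × EuclideanSpace ℝ (Fin n) → EuclideanSpace ℝ (Fin r) :=
    fun q => ξ q.1 q.2 with hΦ_def
  have hp : (t, x) ∈ U := Set.mem_prod.2 ⟨ht, hx⟩
  have hmem : U ∈ nhds (t, x) := hUopen.mem_nhds hp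
  have hΦ3 : ContDiffOn ℝ 3 Φ U := hξ.of_le (WithTop.coe_le_coe.2 le_top)
  set e0 : ℝ × EuclideanSpace ℝ (Fin n) := (1, 0) with he0_def
  set eb : Fin n → ℝ × EuclideanSpace ℝ (Fin n) :=
    fun i => (0, EuclideanSpace.single i 1) with heb_def
  -- smoothness of the total derivative, and of directional derivatives
  have hD : ContDiffOn ℝ 2 (fderiv ℝ Φ) U := hΦ3.fderiv_of_isOpen hUopen (by norm_num)
  have hdir : ∀ d, ContDiffOn ℝ 2 (fun q => fderiv ℝ Φ q d) U := fun d =>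
    ((ContinuousLinearMap.apply ℝ (EuclideanSpace ℝ (Fin r)) d).contDiff.comp_contDiffOn hD)
  set G : ℝ × EuclideanSpace ℝ (Fin n) → EuclideanSpace ℝ (Fin r) :=
    fun q => fderiv ℝ Φ q e0 with hG_def
  set K : Fin n → ℝ × EuclideanSpace ℝ (Fin n) → EuclideanSpace ℝ (Fin r) :=
    fun i q => fderiv ℝ Φ q (eb i) with hK_def
  have hGsm : ContDiffOn ℝ 2 G U := hdir e0
  have hKsm : ∀ i, ContDiffOn ℝ 2 (K i) U := fun i => hdir (eb i)
  have hΦdAt : ∀ q ∈ U, DifferentiableAt ℝ Φ q := fun q hq =>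
    (hΦ3.differentiableOn (by norm_num)).differentiableAt (hUopen.mem_nhds hq)
  have hGdAt : ∀ q ∈ U, DifferentiableAt ℝ G q := fun q hq =>
    (hGsm.differentiableOn (by norm_num)).differentiableAt (hUopen.mem_nhds hq)
  have hKdAt : ∀ i, ∀ q ∈ U, DifferentiableAt ℝ (K i) q := fun i q hq =>
    ((hKsm i).differentiableOn (by norm_num)).differentiableAt (hUopen.mem_nhds hq)
  -- C¹ smoothness of second-level directional derivatives
  have hGd1 : ∀ d, ContDiffOn ℝ 1 (fun q => fderiv ℝ G q d) U := fun d =>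
    (ContinuousLinearMap.apply ℝ (EuclideanSpace ℝ (Fin r)) d).contDiff.comp_contDiffOn
      (hGsm.fderiv_of_isOpen hUopen (by norm_num))
  have hKd1 : ∀ i d, ContDiffOn ℝ 1 (fun q => fderiv ℝ (K i) q d) U := fun i d =>
    (ContinuousLinearMap.apply ℝ (EuclideanSpace ℝ (Fin r)) d).contDiff.comp_contDiffOn
      ((hKsm i).fderiv_of_isOpen hUopen (by norm_num))
  -- (1a) time-slice derivative
  have hTime : ∀ q ∈ U, deriv (fun s => ξ s q.2) q.1 = G q := by
    rintro ⟨s, y⟩ hq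
    exact (slice_fst_hasDerivAt (hΦdAt _ hq).hasFDerivAt).deriv
  -- (1c) the Laplacian of the slice via joint derivatives
  have hLap : ∀ q ∈ U, lap (ξ q.1) q.2 = ∑ i, fderiv ℝ (K i) q (eb i) := by
    rintro ⟨s, y⟩ hq
    have hs : s ∈ Set.Ioo (0:ℝ) T := hq.1
    have hy : y ∈ Ω := hq.2
    have hslice : ContDiffOn ℝ 3 (ξ s) Ω := by
      have : ContDiffOn ℝ 3 (Φ ∘ fun z => ((s:ℝ), z)) Ω :=
        hΦ3.comp ((contDiff_const.prodMk contDiff_id).contDiffOn)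
          (fun z hz => Set.mem_prod.2 ⟨hs, hz⟩)
      exact this
    have hfd : DifferentiableAt ℝ (fderiv ℝ (ξ s)) y :=
      ((hslice.fderiv_of_isOpen (m := 1) hΩ (by norm_num)).differentiableOn
        (by norm_num)).differentiableAt (hΩ.mem_nhds hy)
    unfold lap
    refine Finset.sum_congr rfl fun i _ => ?_
    rw [iteratedFDeriv_two_apply]
    rw [← fderiv_dir_apply hfd]
    have hEE : (fun z => fderiv ℝ (ξ s) z (EuclideanSpace.single i 1))
        =ᶠ[nhds y] fun z => K i (s, z) := by
      filter_upwards [hΩ.mem_nhds hy] with z hz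
      exact slice_snd_fderiv (hΦdAt (s, z) (Set.mem_prod.2 ⟨hs, hz⟩)).hasFDerivAt _
    rw [hEE.fderiv_eq]
    exact slice_snd_fderiv (hKdAt i (s, y) hq).hasFDerivAt _
  -- the reaction term
  set S : ℝ × EuclideanSpace ℝ (Fin n) → EuclideanSpace ℝ (Fin r) :=
    fun q => ∑ j : Fin r, (a j q.2 * Real.exp ⟪stdV j, Φ q⟫) • stdV j with hS_def
  -- the PDE as an identity on U
  have hGid : ∀ q ∈ U, G q = (∑ i, fderiv ℝ (K i) q (eb i)) - S q + w q.2 := by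
    rintro ⟨s, y⟩ hq
    have h0 := heq s hq.1 y hq.2
    rw [hTime (s, y) hq, hLap (s, y) hq] at h0
    have h0' : G (s, y) - (∑ i, fderiv ℝ (K i) (s, y) (eb i)) + S (s, y) - w y = 0 := h0
    refine eq_of_sub_eq_zero ?_
    calc G (s, y) - ((∑ i, fderiv ℝ (K i) (s, y) (eb i)) - S (s, y) + w (s, y).2)
        = G (s, y) - (∑ i, fderiv ℝ (K i) (s, y) (eb i)) + S (s, y) - w y := by abel
      _ = 0 := h0'
  -- `F = -∂ₜ ξ` on U
  have hGF : ∀ q ∈ U, F q.1 q.2 = -G q := by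
    rintro ⟨s, y⟩ hq
    rw [hF s y, hGid (s, y) hq, ← hLap (s, y) hq]
    show -lap (ξ s) y + S (s, y) - w y = -(lap (ξ s) y - S (s, y) + w (s, y).2)
    abel
  -- differentiate the PDE identity in time at (t, x)
  have haw : ∀ j, HasFDerivAt (fun q : ℝ × EuclideanSpace ℝ (Fin n) => a j q.2)
      ((fderiv ℝ (a j) x).comp (ContinuousLinearMap.snd ℝ ℝ _)) (t, x) := fun j =>
    ((((ha_C2 j).differentiableOn (by norm_num)).differentiableAt
      (hΩ.mem_nhds hx)).hasFDerivAt).comp (t, x) hasFDerivAt_snd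
  have hwd : HasFDerivAt (fun q : ℝ × EuclideanSpace ℝ (Fin n) => w q.2)
      ((fderiv ℝ w x).comp (ContinuousLinearMap.snd ℝ ℝ _)) (t, x) :=
    (((hw.differentiableOn (by norm_num)).differentiableAt
      (hΩ.mem_nhds hx)).hasFDerivAt).comp (t, x) hasFDerivAt_snd
  have hinner : ∀ j : Fin r, HasFDerivAt (fun q => (⟪stdV j, Φ q⟫ : ℝ))
      ((fderivInnerCLM ℝ (stdV j, Φ (t, x))).comp
        ((0 : (ℝ × EuclideanSpace ℝ (Fin n)) →L[ℝ] EuclideanSpace ℝ (Fin r)).prod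
          (fderiv ℝ Φ (t, x)))) (t, x) := fun j =>
    (hasFDerivAt_const (stdV j) (t, x)).inner ℝ (hΦdAt _ hp).hasFDerivAt
  have hSd : HasFDerivAt S
      (∑ j : Fin r, ((a j (t, x).2 • (Real.exp ⟪stdV j, Φ (t, x)⟫ •
          ((fderivInnerCLM ℝ (stdV j, Φ (t, x))).comp
            ((0 : (ℝ × EuclideanSpace ℝ (Fin n)) →L[ℝ] EuclideanSpace ℝ (Fin r)).prod
              (fderiv ℝ Φ (t, x)))))
        + Real.exp ⟪stdV j, Φ (t, x)⟫ •
            ((fderiv ℝ (a j) x).comp (ContinuousLinearMap.snd ℝ ℝ _))).smulRight (stdV j)))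
      (t, x) :=
    HasFDerivAt.fun_sum fun j _ => ((haw j).mul ((hinner j).exp)).smul_const (stdV j)
  have hKiDiff : ∀ i, DifferentiableAt ℝ (fun q => fderiv ℝ (K i) q (eb i)) (t, x) := fun i =>
    ((hKd1 i (eb i)).differentiableOn (by norm_num)).differentiableAt hmem
  have hR1 : HasFDerivAt (fun q => ∑ i, fderiv ℝ (K i) q (eb i))
      (∑ i, fderiv ℝ (fun q => fderiv ℝ (K i) q (eb i)) (t, x)) (t, x) :=
    HasFDerivAt.fun_sum fun i _ => (hKiDiff i).hasFDerivAt
  have hGhas : HasFDerivAt G _ (t, x) :=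
    ((hR1.sub hSd).add hwd).congr_of_eventuallyEq
      (Filter.eventuallyEq_of_mem hmem hGid)
  have hC : fderiv ℝ G (t, x) e0
      = (∑ i, fderiv ℝ (fun q => fderiv ℝ (K i) q (eb i)) (t, x) e0)
        - ∑ j : Fin r, (a j x * Real.exp ⟪stdV j, Φ (t, x)⟫ * ⟪stdV j, G (t, x)⟫) • stdV j := by
    rw [hGhas.fderiv]
    simp only [ContinuousLinearMap.add_apply, ContinuousLinearMap.sub_apply,
      ContinuousLinearMap.coe_sum', Finset.sum_apply, ContinuousLinearMap.smulRight_apply,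
      ContinuousLinearMap.smul_apply, ContinuousLinearMap.comp_apply,
      ContinuousLinearMap.prod_apply, fderivInnerCLM_apply, ContinuousLinearMap.zero_apply,
      ContinuousLinearMap.coe_snd', he0_def]
    norm_num [inner_zero_left, mul_assoc]
    rfl
  -- commute ∂ₜ with the spatial second derivatives (Clairaut twice)
  have hComm : ∀ i, fderiv ℝ (fun q => fderiv ℝ (K i) q (eb i)) (t, x) e0
      = fderiv ℝ (fun q => fderiv ℝ G q (eb i)) (t, x) (eb i) := by
    intro i
    rw [fderiv_swap_dir hUopen (hKsm i) hp (eb i) e0]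
    have hEE : (fun q => fderiv ℝ (K i) q e0) =ᶠ[nhds (t, x)]
        fun q => fderiv ℝ G q (eb i) := by
      filter_upwards [hmem] with q hq
      exact fderiv_swap_dir hUopen (hΦ3.of_le (by norm_num)) hq (eb i) e0
    rw [hEE.fderiv_eq]
  set M : Fin n → EuclideanSpace ℝ (Fin r) :=
    fun i => fderiv ℝ (fun q => fderiv ℝ G q (eb i)) (t, x) (eb i) with hM_def
  have hC' : fderiv ℝ G (t, x) e0 = (∑ i, M i)
      - ∑ j : Fin r, (a j x * Real.exp ⟪stdV j, ξ t x⟫ * ⟪stdV j, G (t, x)⟫) • stdV j := by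
    rw [hC]
    exact congrArg₂ _ (Finset.sum_congr rfl fun i _ => hComm i) rfl
  -- time derivative of ‖F‖²
  have hψ : HasDerivAt (fun s => G (s, x)) (fderiv ℝ G (t, x) e0) t :=
    slice_fst_hasDerivAt (hGdAt _ hp).hasFDerivAt
  have hA : deriv (fun s => ‖F s x‖ ^ 2) t = 2 * ⟪G (t, x), fderiv ℝ G (t, x) e0⟫ := by
    have hEv : (fun s => ‖F s x‖ ^ 2) =ᶠ[nhds t]
        fun s => (⟪G (s, x), G (s, x)⟫ : ℝ) := by
      filter_upwards [isOpen_Ioo.mem_nhds ht] with s hs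
      rw [real_inner_self_eq_norm_sq, hGF (s, x) (Set.mem_prod.2 ⟨hs, hx⟩), norm_neg]
    rw [hEv.deriv_eq, (hψ.inner ℝ hψ).deriv]
    show (⟪G (t, x), fderiv ℝ G (t, x) e0⟫ + ⟪fderiv ℝ G (t, x) e0, G (t, x)⟫ : ℝ) = _
    rw [real_inner_comm (fderiv ℝ G (t, x) e0)]; ring
  -- spatial Laplacian of ‖F‖²
  have hη : ContDiffOn ℝ 2 (fun y => G (t, y)) Ω :=
    hGsm.comp ((contDiff_const.prodMk contDiff_id).contDiffOn)
      (fun z hz => Set.mem_prod.2 ⟨ht, hz⟩)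
  have hηd : ∀ y ∈ Ω, DifferentiableAt ℝ (fun z => G (t, z)) y := fun y hy =>
    (hη.differentiableOn (by norm_num)).differentiableAt (hΩ.mem_nhds hy)
  have hκsm : ∀ i, ContDiffOn ℝ 1 (fun y => fderiv ℝ G (t, y) (eb i)) Ω := fun i =>
    (hGd1 (eb i)).comp ((contDiff_const.prodMk contDiff_id).contDiffOn)
      (fun z hz => Set.mem_prod.2 ⟨ht, hz⟩)
  have hb : ContDiffOn ℝ 2 (fun y => (⟪G (t, y), G (t, y)⟫ : ℝ)) Ω := hη.inner ℝ hη
  have hbd : DifferentiableAt ℝ (fderiv ℝ (fun y => (⟪G (t, y), G (t, y)⟫ : ℝ))) x :=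
    ((hb.fderiv_of_isOpen (m := 1) hΩ (by norm_num)).differentiableOn
      (by norm_num)).differentiableAt (hΩ.mem_nhds hx)
  have hbF : (fun y => ‖F t y‖ ^ 2) =ᶠ[nhds x] fun y => (⟪G (t, y), G (t, y)⟫ : ℝ) := by
    filter_upwards [hΩ.mem_nhds hx] with y hy
    rw [real_inner_self_eq_norm_sq, hGF (t, y) (Set.mem_prod.2 ⟨ht, hy⟩), norm_neg]
  have hB : lap (fun y => ‖F t y‖ ^ 2) x
      = ∑ i, (2 * ‖fderiv ℝ G (t, x) (eb i)‖ ^ 2 + 2 * ⟪G (t, x), M i⟫) := by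
    unfold lap
    refine Finset.sum_congr rfl fun i _ => ?_
    rw [iteratedFDeriv_two_apply, hbF.fderiv.fderiv_eq]
    show fderiv ℝ (fderiv ℝ (fun y => (⟪G (t, y), G (t, y)⟫ : ℝ))) x
        (EuclideanSpace.single i 1) (EuclideanSpace.single i 1) = _
    rw [← fderiv_dir_apply hbd]
    have hEv2 : (fun y => fderiv ℝ (fun z => (⟪G (t, z), G (t, z)⟫ : ℝ)) y
          (EuclideanSpace.single i 1))
        =ᶠ[nhds x] fun y => (2 : ℝ) * ⟪G (t, y), fderiv ℝ G (t, y) (eb i)⟫ := by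
      filter_upwards [hΩ.mem_nhds hx] with y hy
      rw [fderiv_inner_apply ℝ (hηd y hy) (hηd y hy),
        slice_snd_fderiv (hGdAt (t, y) (Set.mem_prod.2 ⟨ht, hy⟩)).hasFDerivAt]
      show (⟪G (t, y), fderiv ℝ G (t, y) (eb i)⟫ + ⟪fderiv ℝ G (t, y) (eb i), G (t, y)⟫ : ℝ) = _
      rw [real_inner_comm (fderiv ℝ G (t, y) (eb i))]; ring
    rw [hEv2.fderiv_eq]
    have hηx := hηd x hx
    have hκx : DifferentiableAt ℝ (fun y => fderiv ℝ G (t, y) (eb i)) x :=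
      ((hκsm i).differentiableOn (by norm_num)).differentiableAt (hΩ.mem_nhds hx)
    rw [fderiv_const_mul (hηx.inner ℝ hκx) 2, ContinuousLinearMap.smul_apply,
      fderiv_inner_apply ℝ hηx hκx]
    have e1 : fderiv ℝ (fun y => fderiv ℝ G (t, y) (eb i)) x (EuclideanSpace.single i 1)
        = M i := by
      have hGKd : DifferentiableAt ℝ (fun q => fderiv ℝ G q (eb i)) (t, x) :=
        ((hGd1 (eb i)).differentiableOn (by norm_num)).differentiableAt hmem
      exact slice_snd_fderiv hGKd.hasFDerivAt _
    have e2 : fderiv ℝ (fun z => G (t, z)) x (EuclideanSpace.single i 1)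
        = fderiv ℝ G (t, x) (eb i) :=
      slice_snd_fderiv (hGdAt _ hp).hasFDerivAt _
    rw [e1, e2]
    show (2 : ℝ) • ((⟪G (t, x), M i⟫ : ℝ) + ⟪fderiv ℝ G (t, x) (eb i), fderiv ℝ G (t, x) (eb i)⟫)
        = _
    rw [real_inner_self_eq_norm_sq, smul_eq_mul]; ring
  -- assemble everything
  have hFtx : F t x = -G (t, x) := hGF (t, x) hp
  have hGtx : G (t, x) = -F t x := by rw [hFtx, neg_neg]
  have key : (1 / 2) * (deriv (fun s => ‖F s x‖ ^ 2) t - lap (fun y => ‖F t y‖ ^ 2) x)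
      = -(∑ j : Fin r, a j x * Real.exp ⟪stdV j, ξ t x⟫ * ⟪stdV j, F t x⟫ ^ 2)
        - ∑ i, ‖fderiv ℝ G (t, x) (eb i)‖ ^ 2 := by
    rw [hA, hB, hC', inner_sub_right, inner_sum, inner_sum]
    have hj : ∀ j : Fin r,
        (⟪G (t, x), (a j x * Real.exp ⟪stdV j, ξ t x⟫ * ⟪stdV j, G (t, x)⟫) • stdV j⟫ : ℝ)
        = a j x * Real.exp ⟪stdV j, ξ t x⟫ * ⟪stdV j, F t x⟫ ^ 2 := by
      intro j
      rw [real_inner_smul_right, hGtx, inner_neg_left, inner_neg_right,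
        real_inner_comm (F t x) (stdV j)]
      ring
    rw [Finset.sum_congr rfl fun j _ => hj j, Finset.sum_add_distrib,
      ← Finset.mul_sum, ← Finset.mul_sum]
    ring
  have hnn : (0:ℝ) ≤ ∑ i, ‖fderiv ℝ G (t, x) (eb i)‖ ^ 2 :=
    Finset.sum_nonneg fun i _ => sq_nonneg _
  rw [key]
  linarith
end

section
/- Let Ω ⊆ ℝ^n be a bounded nonempty open set with closure K and frontier ∂Ω, and let a < b be real numbers. Let f : [a,b] × K → ℝ be continuous, suppose the restriction of f to [a,b] × ∂Ω is a constant function, suppose f is C² on (a,b] × Ω (jointly in (t,x)), and suppose ∂_t f(t,x) ≤ Δ_x f(t,x) for all (t,x) ∈ (a,b] × Ω, where Δ_x is the Euclidean Laplacian in x. Then the function t ↦ sup_{p ∈ K} f(t,p) is monotone nonincreasing on [a,b]. (Euclidean-domain version of the parabolic maximum principle, Lemma 2.6.) -/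
open Set Filter Topology

/-- If `φ'' x > 0`, the second derivative test makes `x` a local minimum too, so `φ` is locally
constant and `φ'' x = 0`. -/
theorem IsLocalMax.deriv_deriv_nonpos {φ : ℝ → ℝ} {x : ℝ} (hmax : IsLocalMax φ x)
    (hφ : ContinuousAt φ x) : deriv (deriv φ) x ≤ 0 := by
  by_contra! hpos
  have hmin : IsLocalMin φ x := isLocalMin_of_deriv_deriv_pos hpos hmax.deriv_eq_zero hφ
  have hconst : φ =ᶠ[𝓝 x] fun _ => φ x := by
    filter_upwards [hmax, hmin] with r hr₁ hr₂ using le_antisymm hr₁ hr₂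
  have hderiv : deriv φ =ᶠ[𝓝 x] fun _ => 0 := by simpa using hconst.deriv
  simp [hderiv.deriv_eq] at hpos

theorem IsMaxOn.nonneg_of_hasDerivAt_right {φ : ℝ → ℝ} {a b d : ℝ} (hab : a < b)
    (hmax : IsMaxOn φ (Icc a b) b) (hφ : HasDerivAt φ d b) : 0 ≤ d := by
  have hcone : a - b ∈ posTangentConeAt (Icc a b) b :=
    sub_mem_posTangentConeAt_of_segment_subset (by rw [segment_symm, segment_eq_Icc hab.le])
  have := hmax.localize.hasFDerivWithinAt_nonpos hφ.hasFDerivAt.hasFDerivWithinAt hcone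
  simp only [ContinuousLinearMap.toSpanSingleton_apply, smul_eq_mul] at this
  nlinarith

theorem IsLocalMax.fderiv_fderiv_apply_self_nonpos {E : Type*} [NormedAddCommGroup E]
    [NormedSpace ℝ E] {h : E → ℝ} {y : E} (hmax : IsLocalMax h y)
    (hh : ContDiffAt ℝ 2 h y) (v : E) : fderiv ℝ (fderiv ℝ h) y v v ≤ 0 := by
  have hline : ∀ r : ℝ, HasDerivAt (fun r : ℝ => y + r • v) v r := fun r => by
    simpa using ((hasDerivAt_id r).smul_const v).const_add y
  have hline0 : Tendsto (fun r : ℝ => y + r • v) (𝓝 0) (𝓝 y) := by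
    simpa using (hline 0).continuousAt.tendsto
  have hderiv : deriv (fun r : ℝ => h (y + r • v)) =ᶠ[𝓝 0] fun r => fderiv ℝ h (y + r • v) v := by
    have hdiff : ∀ᶠ z in 𝓝 y, DifferentiableAt ℝ h z :=
      (hh.eventually (by simp)).mono fun z hz => hz.differentiableAt (by norm_num)
    filter_upwards [hline0.eventually hdiff] with r hr
    exact (hr.hasFDerivAt.comp_hasDerivAt r (hline r)).deriv
  have hsecond : HasDerivAt (fun r : ℝ => fderiv ℝ h (y + r • v) v)
      (fderiv ℝ (fderiv ℝ h) y v v) 0 := by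
    have hB : HasFDerivAt (fderiv ℝ h) (fderiv ℝ (fderiv ℝ h) y) (y + (0 : ℝ) • v) := by
      simpa using ((hh.fderiv_right (m := 1) (by norm_num)).differentiableAt
        (by norm_num)).hasFDerivAt
    have hcomp : HasDerivAt (fun r : ℝ => fderiv ℝ h (y + r • v))
        (fderiv ℝ (fderiv ℝ h) y v) 0 := hB.comp_hasDerivAt 0 (hline 0)
    simpa using hcomp.clm_apply (hasDerivAt_const 0 v)
  rw [← hsecond.deriv, ← hderiv.deriv_eq]
  refine IsLocalMax.deriv_deriv_nonpos ?_ ?_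
  · simpa [IsLocalMax, IsMaxFilter] using hline0.eventually hmax
  · exact hh.continuousAt.comp_of_eq (hline 0).continuousAt (by simp)

theorem IsLocalMax.lap_nonpos {n : ℕ} {h : EuclideanSpace ℝ (Fin n) → ℝ}
    {y : EuclideanSpace ℝ (Fin n)} (hmax : IsLocalMax h y) (hh : ContDiffAt ℝ 2 h y) :
    lap h y ≤ 0 :=
  Finset.sum_nonpos fun _ _ => by
    rw [iteratedFDeriv_two_apply]
    exact hmax.fderiv_fderiv_apply_self_nonpos hh _

section
variable {n : ℕ} {Ω : Set (EuclideanSpace ℝ (Fin n))} {f : ℝ → EuclideanSpace ℝ (Fin n) → ℝ}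

theorem lap_lt_deriv_of_isMaxOn (hΩo : IsOpen Ω) {s₀ s ε : ℝ} (hs : s₀ < s) (hε : 0 < ε)
    {y : EuclideanSpace ℝ (Fin n)} (hy : y ∈ Ω)
    (hf : ContDiffAt ℝ 2 (fun p : ℝ × EuclideanSpace ℝ (Fin n) => f p.1 p.2) (s, y))
    (hmax : IsMaxOn (fun p : ℝ × EuclideanSpace ℝ (Fin n) => f p.1 p.2 - ε * p.1)
      (Icc s₀ s ×ˢ Ω) (s, y)) :
    lap (f s) y < deriv (fun s' => f s' y) s := by
  have hspace : IsLocalMax (f s) y := by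
    filter_upwards [hΩo.mem_nhds hy] with x hx
    simpa using hmax (mk_mem_prod (right_mem_Icc.2 hs.le) hx)
  have htime : HasDerivAt (fun s' => f s' y) (deriv (fun s' => f s' y) s) s := by
    have hpath : DifferentiableAt ℝ (fun s' : ℝ => (s', y)) s := by fun_prop
    exact ((hf.differentiableAt (by norm_num)).comp s hpath).hasDerivAt
  have htime_ge : ε ≤ deriv (fun s' => f s' y) s := by
    have hφ := htime.sub ((hasDerivAt_id s).const_mul ε)
    refine sub_nonneg.1 (IsMaxOn.nonneg_of_hasDerivAt_right hs ?_ (by simpa using hφ))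
    exact fun s' hs' => hmax (mk_mem_prod hs' hy)
  have hlap : lap (f s) y ≤ 0 :=
    hspace.lap_nonpos (hf.comp y (contDiffAt_const.prodMk contDiffAt_id))
  linarith

theorem le_add_mul_of_heat_subsolution (hΩo : IsOpen Ω) (hK : IsCompact (closure Ω))
    {t₀ t₁ M ε : ℝ} (hε : 0 < ε)
    (hcont : ContinuousOn (fun p : ℝ × EuclideanSpace ℝ (Fin n) => f p.1 p.2)
      (Icc t₀ t₁ ×ˢ closure Ω))
    (hC2 : ∀ s ∈ Ioc t₀ t₁, ∀ x ∈ Ω,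
      ContDiffAt ℝ 2 (fun p : ℝ × EuclideanSpace ℝ (Fin n) => f p.1 p.2) (s, x))
    (hineq : ∀ s ∈ Ioc t₀ t₁, ∀ x ∈ Ω, deriv (fun s' => f s' x) s ≤ lap (f s) x)
    (hM₀ : ∀ x ∈ closure Ω, f t₀ x ≤ M) (hMbdry : ∀ s ∈ Icc t₀ t₁, ∀ x ∈ frontier Ω, f s x ≤ M)
    {x : EuclideanSpace ℝ (Fin n)} (hx : x ∈ closure Ω) (ht : t₀ ≤ t₁) :
    f t₁ x ≤ M + ε * (t₁ - t₀) := by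
  set g := fun p : ℝ × EuclideanSpace ℝ (Fin n) => f p.1 p.2 - ε * p.1
  have hg : ContinuousOn g (Icc t₀ t₁ ×ˢ closure Ω) :=
    hcont.sub (continuous_const.mul continuous_fst).continuousOn
  obtain ⟨⟨s, y⟩, ⟨hs, hy⟩, hmax⟩ := (isCompact_Icc.prod hK).exists_isMaxOn
    ⟨(t₁, x), right_mem_Icc.2 ht, hx⟩ hg
  have hgmax : g (s, y) ≤ M - ε * t₀ := by
    by_cases hyΩ : y ∈ Ω
    · rcases hs.1.eq_or_lt with rfl | hs₀
      · simpa [g] using hM₀ y hy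
      · refine absurd (hineq s ⟨hs₀, hs.2⟩ y hyΩ) (not_le.2 ?_)
        refine lap_lt_deriv_of_isMaxOn hΩo hs₀ hε hyΩ (hC2 s ⟨hs₀, hs.2⟩ y hyΩ) ?_
        exact hmax.on_subset (prod_mono (Icc_subset_Icc_right hs.2) subset_closure)
    · have hbdry := hMbdry s hs y (hΩo.frontier_eq ▸ ⟨hy, hyΩ⟩)
      have hεs : ε * t₀ ≤ ε * s := mul_le_mul_of_nonneg_left hs.1 hε.le
      simp only [g]
      linarith
  have hgx : g (t₁, x) ≤ g (s, y) := hmax (mk_mem_prod (right_mem_Icc.2 ht) hx)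
  simp only [g] at hgx hgmax
  linarith

theorem le_of_heat_subsolution_of_contDiffAt (hΩo : IsOpen Ω) (hK : IsCompact (closure Ω))
    {t₀ t₁ M : ℝ}
    (hcont : ContinuousOn (fun p : ℝ × EuclideanSpace ℝ (Fin n) => f p.1 p.2)
      (Icc t₀ t₁ ×ˢ closure Ω))
    (hC2 : ∀ s ∈ Ioc t₀ t₁, ∀ x ∈ Ω,
      ContDiffAt ℝ 2 (fun p : ℝ × EuclideanSpace ℝ (Fin n) => f p.1 p.2) (s, x))
    (hineq : ∀ s ∈ Ioc t₀ t₁, ∀ x ∈ Ω, deriv (fun s' => f s' x) s ≤ lap (f s) x)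
    (hM₀ : ∀ x ∈ closure Ω, f t₀ x ≤ M) (hMbdry : ∀ s ∈ Icc t₀ t₁, ∀ x ∈ frontier Ω, f s x ≤ M)
    {x : EuclideanSpace ℝ (Fin n)} (hx : x ∈ closure Ω) (ht : t₀ ≤ t₁) :
    f t₁ x ≤ M := by
  have hlim : Tendsto (fun ε : ℝ => M + ε * (t₁ - t₀)) (𝓝[>] 0) (𝓝 M) := by
    refine tendsto_nhdsWithin_of_tendsto_nhds ?_
    exact (by fun_prop : Continuous fun ε : ℝ => M + ε * (t₁ - t₀)).tendsto' 0 M (by simp)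
  exact ge_of_tendsto hlim (eventually_nhdsWithin_of_forall fun ε hε =>
    le_add_mul_of_heat_subsolution hΩo hK hε hcont hC2 hineq hM₀ hMbdry hx ht)

theorem le_of_heat_subsolution (hΩo : IsOpen Ω) (hK : IsCompact (closure Ω))
    {t₀ t₁ M : ℝ}
    (hcont : ContinuousOn (fun p : ℝ × EuclideanSpace ℝ (Fin n) => f p.1 p.2)
      (Icc t₀ t₁ ×ˢ closure Ω))
    (hC2 : ContDiffOn ℝ 2 (fun p : ℝ × EuclideanSpace ℝ (Fin n) => f p.1 p.2)
      (Ioc t₀ t₁ ×ˢ Ω))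
    (hineq : ∀ s ∈ Ioc t₀ t₁, ∀ x ∈ Ω, deriv (fun s' => f s' x) s ≤ lap (f s) x)
    (hM₀ : ∀ x ∈ closure Ω, f t₀ x ≤ M) (hMbdry : ∀ s ∈ Icc t₀ t₁, ∀ x ∈ frontier Ω, f s x ≤ M)
    {x : EuclideanSpace ℝ (Fin n)} (hx : x ∈ closure Ω) (ht : t₀ ≤ t₁) :
    f t₁ x ≤ M := by
  rcases ht.eq_or_lt with rfl | ht
  · exact hM₀ x hx
  have hbefore : ∀ t ∈ Ico t₀ t₁, f t x ≤ M := fun t ht' => by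
    have hsub : Icc t₀ t ⊆ Icc t₀ t₁ := Icc_subset_Icc_right ht'.2.le
    refine le_of_heat_subsolution_of_contDiffAt hΩo hK (hcont.mono (prod_mono hsub le_rfl))
      (fun s hs y hy => hC2.contDiffAt ?_) (fun s hs => hineq s ⟨hs.1, hs.2.trans ht'.2.le⟩)
      hM₀ (fun s hs => hMbdry s (hsub hs)) hx ht'.1
    exact mem_of_superset ((isOpen_Ioo.prod hΩo).mem_nhds ⟨⟨hs.1, hs.2.trans_lt ht'.2⟩, hy⟩)
      (prod_mono Ioo_subset_Ioc_self le_rfl)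
  have hcont_t : ContinuousOn (fun t => f t x) (closure (Ico t₀ t₁)) := by
    rw [closure_Ico ht.ne]
    exact hcont.comp (continuous_id.prodMk continuous_const).continuousOn fun t ht' => ⟨ht', hx⟩
  exact le_on_closure hbefore hcont_t continuousOn_const
    (by rw [closure_Ico ht.ne]; exact right_mem_Icc.2 ht.le)
end

theorem parabolic_maximum_principle_general (n : ℕ) (Ω : Set (EuclideanSpace ℝ (Fin n)))
    (hΩo : IsOpen Ω) (hΩb : Bornology.IsBounded Ω) (hΩne : Ω.Nonempty)
    (a b : ℝ) (f : ℝ → EuclideanSpace ℝ (Fin n) → ℝ)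
    (hcont : ContinuousOn (fun p : ℝ × EuclideanSpace ℝ (Fin n) => f p.1 p.2)
      (Set.Icc a b ×ˢ closure Ω))
    (hconst : ∃ c : ℝ, ∀ t ∈ Set.Icc a b, ∀ x ∈ frontier Ω, f t x = c)
    (hC2 : ContDiffOn ℝ 2 (fun p : ℝ × EuclideanSpace ℝ (Fin n) => f p.1 p.2)
      (Set.Ioc a b ×ˢ Ω))
    (hineq : ∀ t ∈ Set.Ioc a b, ∀ x ∈ Ω, deriv (fun s => f s x) t ≤ lap (f t) x) :
    AntitoneOn (fun t => sSup (f t '' closure Ω)) (Set.Icc a b) := by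
  obtain ⟨c, hc⟩ := hconst
  intro t₁ ht₁ t₂ ht₂ h12
  have hK : IsCompact (closure Ω) := hΩb.isCompact_closure
  have hsub : Icc t₁ t₂ ⊆ Icc a b := Icc_subset_Icc ht₁.1 ht₂.2
  have hbdd : BddAbove (f t₁ '' closure Ω) :=
    (hK.image_of_continuousOn (hcont.comp (continuous_const.prodMk continuous_id).continuousOn
      fun x hx => ⟨ht₁, hx⟩)).bddAbove
  have hM₀ : ∀ x ∈ closure Ω, f t₁ x ≤ sSup (f t₁ '' closure Ω) := fun x hx =>
    le_csSup hbdd (mem_image_of_mem _ hx)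
  refine csSup_le (hΩne.closure.image _) (forall_mem_image.2 fun x hx => ?_)
  refine le_of_heat_subsolution hΩo hK (hcont.mono (prod_mono hsub le_rfl))
    (hC2.mono (prod_mono (Ioc_subset_Ioc ht₁.1 ht₂.2) le_rfl))
    (fun s hs => hineq s ⟨ht₁.1.trans_lt hs.1, hs.2.trans ht₂.2⟩) hM₀ (fun s hs y hy => ?_) hx h12
  rw [hc s (hsub hs) y hy, ← hc t₁ ht₁ y hy]
  exact hM₀ y (frontier_subset_closure hy)

/-- Euclidean-domain version of the parabolic maximum principle (Lemma 2.6):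
if `f` is continuous on `[a,b] × closure Ω`, constant on `[a,b] × ∂Ω`, `C²` on `(a,b] × Ω`,
and satisfies `∂_t f ≤ Δ_x f` there, then `t ↦ sup_{closure Ω} f(t, ·)` is nonincreasing. -/
theorem parabolic_maximum_principle (n : ℕ) (Ω : Set (EuclideanSpace ℝ (Fin n)))
    (hΩo : IsOpen Ω) (hΩb : Bornology.IsBounded Ω) (hΩne : Ω.Nonempty)
    (a b : ℝ) (hab : a < b) (f : ℝ → EuclideanSpace ℝ (Fin n) → ℝ)
    (hcont : ContinuousOn (fun p : ℝ × EuclideanSpace ℝ (Fin n) => f p.1 p.2)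
      (Set.Icc a b ×ˢ closure Ω))
    (hconst : ∃ c : ℝ, ∀ t ∈ Set.Icc a b, ∀ x ∈ frontier Ω, f t x = c)
    (hC2 : ContDiffOn ℝ 2 (fun p : ℝ × EuclideanSpace ℝ (Fin n) => f p.1 p.2)
      (Set.Ioc a b ×ˢ Ω))
    (hineq : ∀ t ∈ Set.Ioc a b, ∀ x ∈ Ω, deriv (fun s => f s x) t ≤ lap (f t) x) :
    AntitoneOn (fun t => sSup (f t '' closure Ω)) (Set.Icc a b) :=
  parabolic_maximum_principle_general n Ω hΩo hΩb hΩne a b f hcont hconst hC2 hineq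
end

section
/- Let Ω ⊆ ℝ^n be open, let r ≥ 1, and let f_1,…,f_r : Ω → ℝ be C² functions. Then at every point of Ω, Δ log(Σ_{j=1}^r e^{f_j}) ≥ (Σ_{j=1}^r (Δ f_j) e^{f_j}) / (Σ_{j=1}^r e^{f_j}). (This log-sum-exp Laplacian inequality is the key analytic step in the proofs of Theorems 1.3 and 1.4; in the paper's geometric-Laplacian sign convention it reads Δ_{g_M} log(Σ e^{f_j}) ≤ (Σ (Δ_{g_M} f_j) e^{f_j})/(Σ e^{f_j}).) -/
/-!
With weights `p_j = e^{f_j} / Σ_k e^{f_k}`, the second derivative of `log Σ_j e^{f_j}` in a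
direction `v` is `Σ_j p_j ∂_v² f_j + (Σ_j p_j (∂_v f_j)² - (Σ_j p_j ∂_v f_j)²)`. The bracket is the
variance of `∂_v f_j` under the probability weights `p`, hence nonnegative by Cauchy–Schwarz;
summing over the coordinate directions gives the inequality for the Laplacian.
-/

open Finset Real Filter Topology

theorem Finset.sq_sum_mul_div_le_sum_mul_sq_div {ι : Type*} (s : Finset ι) {c : ι → ℝ}
    (a : ι → ℝ) (hc : ∀ j ∈ s, 0 ≤ c j) :
    ((∑ j ∈ s, c j * a j) / ∑ j ∈ s, c j) ^ 2 ≤ (∑ j ∈ s, c j * a j ^ 2) / ∑ j ∈ s, c j := by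
  have hCS : (∑ j ∈ s, c j * a j) ^ 2 ≤ (∑ j ∈ s, c j) * ∑ j ∈ s, c j * a j ^ 2 :=
    sum_sq_le_sum_mul_sum_of_sq_le_mul s hc (fun j hj => mul_nonneg (hc j hj) (sq_nonneg _))
      fun j _ => (by ring : (c j * a j) ^ 2 = c j * (c j * a j ^ 2)).le
  rcases (sum_nonneg hc).eq_or_lt with hS | hS
  · simp [← hS]
  rw [div_pow, div_le_div_iff₀ (by positivity) hS]
  nlinarith

section LogSumExp

variable {E ι : Type*} [NormedAddCommGroup E] [NormedSpace ℝ E] [Fintype ι] {f : ι → E → ℝ}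

theorem hasFDerivAt_log_sum_exp [Nonempty ι] {y : E} (hf : ∀ j, DifferentiableAt ℝ (f j) y) :
    HasFDerivAt (fun y => log (∑ j, exp (f j y)))
      ((∑ j, exp (f j y))⁻¹ • ∑ j, exp (f j y) • fderiv ℝ (f j) y) y :=
  (HasFDerivAt.fun_sum fun j _ => (hf j).hasFDerivAt.exp).log
    (sum_pos (fun _ _ => exp_pos _) univ_nonempty).ne'

theorem fderiv_fderiv_log_sum_exp_apply {x : E} (hf : ∀ j, ContDiffAt ℝ 2 (f j) x) (v : E) :
    fderiv ℝ (fderiv ℝ fun y => log (∑ j, exp (f j y))) x v v =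
      (∑ j, exp (f j x) * (fderiv ℝ (fderiv ℝ (f j)) x v v + fderiv ℝ (f j) x v ^ 2)) /
          ∑ j, exp (f j x) -
        ((∑ j, exp (f j x) * fderiv ℝ (f j) x v) / ∑ j, exp (f j x)) ^ 2 := by
  rcases isEmpty_or_nonempty ι with _ | _
  · -- both sides vanish: `log 0 = 0` and `0 / 0 = 0`
    simp
  have hd : ∀ᶠ y in 𝓝 x, ∀ j, DifferentiableAt ℝ (f j) y := by
    refine eventually_all.2 fun j => ((hf j).eventually (by simp)).mono fun y hy => ?_
    exact hy.differentiableAt (by norm_num)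
  have hS : HasFDerivAt (fun y => ∑ j, exp (f j y)) (∑ j, exp (f j x) • fderiv ℝ (f j) x) x :=
    HasFDerivAt.fun_sum fun j _ => ((hf j).differentiableAt (by norm_num)).hasFDerivAt.exp
  have hG : HasFDerivAt (fun y => ∑ j, exp (f j y) • fderiv ℝ (f j) y)
      (∑ j, (exp (f j x) • fderiv ℝ (fderiv ℝ (f j)) x +
        (exp (f j x) • fderiv ℝ (f j) x).smulRight (fderiv ℝ (f j) x))) x :=
    HasFDerivAt.fun_sum fun j _ =>
      ((hf j).differentiableAt (by norm_num)).hasFDerivAt.exp.smul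
        (((hf j).fderiv_right (m := 1) le_rfl).differentiableAt one_ne_zero).hasFDerivAt
  have hSx : (∑ j, exp (f j x)) ≠ 0 := (sum_pos (fun _ _ => exp_pos _) univ_nonempty).ne'
  have hfL : fderiv ℝ (fun y => log (∑ j, exp (f j y))) =ᶠ[𝓝 x]
      fun y => (∑ j, exp (f j y))⁻¹ • ∑ j, exp (f j y) • fderiv ℝ (f j) y :=
    hd.mono fun y hy => (hasFDerivAt_log_sum_exp hy).fderiv
  have hinv : HasFDerivAt (fun y => (∑ j, exp (f j y))⁻¹)
      (-((∑ j, exp (f j x)) ^ 2)⁻¹ • ∑ j, exp (f j x) • fderiv ℝ (f j) x) x :=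
    (hasDerivAt_inv hSx).comp_hasFDerivAt x hS
  rw [hfL.fderiv_eq, (hinv.fun_smul hG).fderiv]
  simp only [add_apply, smul_apply, neg_apply, _root_.sum_apply,
    ContinuousLinearMap.smulRight_apply, neg_smul, smul_eq_mul]
  field_simp
  ring

theorem sum_exp_mul_fderiv_fderiv_div_le {x : E} (hf : ∀ j, ContDiffAt ℝ 2 (f j) x) (v : E) :
    (∑ j, exp (f j x) * fderiv ℝ (fderiv ℝ (f j)) x v v) / ∑ j, exp (f j x) ≤
      fderiv ℝ (fderiv ℝ fun y => log (∑ j, exp (f j y))) x v v := by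
  rw [fderiv_fderiv_log_sum_exp_apply hf v]
  simp only [mul_add, sum_add_distrib, add_div]
  have hvar := sq_sum_mul_div_le_sum_mul_sq_div univ (fun j => fderiv ℝ (f j) x v)
    fun j _ => (exp_pos (f j x)).le
  linarith

end LogSumExp

theorem lap_eq_sum_fderiv_fderiv {n : ℕ} {F : Type*} [NormedAddCommGroup F] [NormedSpace ℝ F]
    (f : EuclideanSpace ℝ (Fin n) → F) (x : EuclideanSpace ℝ (Fin n)) :
    lap f x = ∑ i, fderiv ℝ (fderiv ℝ f) x (EuclideanSpace.single i 1) (EuclideanSpace.single i 1) :=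
  sum_congr rfl fun _ _ => iteratedFDeriv_two_apply f x _

theorem log_sum_exp_laplacian_general (n r : ℕ)
    (Ω : Set (EuclideanSpace ℝ (Fin n))) (hΩ : IsOpen Ω)
    (f : Fin r → EuclideanSpace ℝ (Fin n) → ℝ)
    (hf : ∀ j, ContDiffOn ℝ 2 (f j) Ω) :
    ∀ x ∈ Ω,
      (∑ j : Fin r, lap (f j) x * Real.exp (f j x)) / (∑ j : Fin r, Real.exp (f j x))
        ≤ lap (fun y => Real.log (∑ j : Fin r, Real.exp (f j y))) x := by
  intro x hx
  have hfx : ∀ j, ContDiffAt ℝ 2 (f j) x := fun j => (hf j).contDiffAt (hΩ.mem_nhds hx)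
  simp only [lap_eq_sum_fderiv_fderiv, sum_mul, sum_div]
  rw [sum_comm]
  refine sum_le_sum fun _ _ => ?_
  simpa only [mul_comm, sum_div] using sum_exp_mul_fderiv_fderiv_div_le hfx _

/-- Log-sum-exp Laplacian inequality (key analytic step of Theorems 1.3 and 1.4):
for `C²` functions `f_1, …, f_r` on an open `Ω ⊆ ℝ^n`,
`Δ log(Σ_j e^{f_j}) ≥ (Σ_j (Δf_j) e^{f_j}) / (Σ_j e^{f_j})` on `Ω`. -/
theorem log_sum_exp_laplacian (n r : ℕ) (hr : 1 ≤ r)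
    (Ω : Set (EuclideanSpace ℝ (Fin n))) (hΩ : IsOpen Ω)
    (f : Fin r → EuclideanSpace ℝ (Fin n) → ℝ)
    (hf : ∀ j, ContDiffOn ℝ 2 (f j) Ω) :
    ∀ x ∈ Ω,
      (∑ j : Fin r, lap (f j) x * Real.exp (f j x)) / (∑ j : Fin r, Real.exp (f j x))
        ≤ lap (fun y => Real.log (∑ j : Fin r, Real.exp (f j y))) x :=
  log_sum_exp_laplacian_general n r Ω hΩ f hf
end
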